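/- Let ρ = 13/42. For a box Q_L of side L in ℤ² partitioned into subboxes of side L^ρ, the probability that there exist two vertices in non-neighboring subboxes of Q_L that are linked by an edge is at most C₂ / L^(7ρ - 2), where C₂ is a constant, assuming P({x,y} ∈ E) ≤ C / d(x,y)^9 for d(x,y) > 1. In particular this probability tends to 0 as L → ∞ since 7ρ - 2 > 0. -/
import Mathlib


open MeasureTheory ProbabilityTheory

/-- ℓ¹ distance on ℤ². -/
def dist1 (x y : ℤ × ℤ) : ℕ := (x.1 - y.1).natAbs + (x.2 - y.2).natAbs

/-- The index of the subbox of side `s` containing the site `x`. -/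
def subIdx (s : ℕ) (x : ℤ × ℤ) : ℤ × ℤ := (Int.fdiv x.1 s, Int.fdiv x.2 s)

/-- Two sites lie in non-neighboring subboxes of side `s` if their subbox indices differ by
at least 2 in some coordinate (neighbors are the subboxes at distance at most `√2`). -/
def nonNeighbor (s : ℕ) (x y : ℤ × ℤ) : Prop :=
  2 ≤ max ((subIdx s x).1 - (subIdx s y).1).natAbs ((subIdx s x).2 - (subIdx s y).2).natAbs

/-- The box `Q_L = [-L/2, L/2]² ∩ ℤ²`. -/
def boxQ (L : ℕ) : Set (ℤ × ℤ) := {x | 2 * x.1.natAbs ≤ L ∧ 2 * x.2.natAbs ≤ L}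

open scoped ENNReal

/-- Auxiliary summand: `1/k^9` cut off below `s+1`. -/
noncomputable def Fb (s k : ℕ) : ℝ≥0∞ :=
  if s + 1 ≤ k then ENNReal.ofReal (((k : ℝ) ^ 9)⁻¹) else 0

lemma fdiv_gap {s : ℕ} (hs : 0 < s) {a b : ℤ}
    (h : 2 ≤ (Int.fdiv a s - Int.fdiv b s).natAbs) : (s : ℤ) + 1 ≤ |a - b| := by
  have hs' : (0:ℤ) < (s:ℤ) := by exact_mod_cast hs
  rw [Int.fdiv_eq_ediv_of_nonneg a hs'.le, Int.fdiv_eq_ediv_of_nonneg b hs'.le] at h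
  have ha := Int.mul_ediv_add_emod a (s:ℤ)
  have hb := Int.mul_ediv_add_emod b (s:ℤ)
  have ha1 : 0 ≤ a % (s:ℤ) := Int.emod_nonneg a hs'.ne'
  have ha2 : a % (s:ℤ) < s := Int.emod_lt_of_pos a hs'
  have hb1 : 0 ≤ b % (s:ℤ) := Int.emod_nonneg b hs'.ne'
  have hb2 : b % (s:ℤ) < s := Int.emod_lt_of_pos b hs'
  have h2 : 2 ≤ |a / (s:ℤ) - b / (s:ℤ)| := by
    rw [Int.abs_eq_natAbs]; exact_mod_cast h
  rcases le_abs.mp h2 with h3 | h3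
  · have hmul : (s:ℤ) * 2 ≤ (s:ℤ) * (a / (s:ℤ) - b / (s:ℤ)) :=
      mul_le_mul_of_nonneg_left h3 hs'.le
    have : (s:ℤ) + 1 ≤ a - b := by nlinarith [hmul]
    exact this.trans (le_abs_self _)
  · have hmul : (s:ℤ) * 2 ≤ (s:ℤ) * (b / (s:ℤ) - a / (s:ℤ)) :=
      mul_le_mul_of_nonneg_left (by linarith) hs'.le
    have : (s:ℤ) + 1 ≤ -(a - b) := by nlinarith [hmul]
    exact this.trans (neg_le_abs _)

lemma nonNeighbor_dist {s : ℕ} (hs : 0 < s) {x y : ℤ × ℤ} (h : nonNeighbor s x y) :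
    s + 1 ≤ dist1 x y := by
  unfold nonNeighbor subIdx at h
  simp only [le_max_iff] at h
  rcases h with h | h
  · have := fdiv_gap hs h
    rw [Int.abs_eq_natAbs] at this
    have : s + 1 ≤ (x.1 - y.1).natAbs := by exact_mod_cast this
    unfold dist1; omega
  · have := fdiv_gap hs h
    rw [Int.abs_eq_natAbs] at this
    have : s + 1 ≤ (x.2 - y.2).natAbs := by exact_mod_cast this
    unfold dist1; omega

/-- Tail of the sum of inverse squares. -/
lemma tail_inv_sq {s : ℕ} (hs : 0 < s) :
    ∑' j : ℕ, (if s + 1 ≤ j then ENNReal.ofReal (((j : ℝ) ^ 2)⁻¹) else 0)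
      ≤ ENNReal.ofReal (2 / (s : ℝ)) := by
  rw [ENNReal.tsum_eq_iSup_sum]
  apply iSup_le
  intro F
  set N := F.sup id with hN
  have hsub : F.filter (fun j => s + 1 ≤ j) ⊆ Finset.Ioc s N := by
    intro j hj
    simp only [Finset.mem_filter] at hj
    exact Finset.mem_Ioc.mpr ⟨by omega, Finset.le_sup (f := id) hj.1⟩
  calc ∑ j ∈ F, (if s + 1 ≤ j then ENNReal.ofReal (((j : ℝ) ^ 2)⁻¹) else 0)
      = ∑ j ∈ F.filter (fun j => s + 1 ≤ j), ENNReal.ofReal (((j : ℝ) ^ 2)⁻¹) := by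
        rw [Finset.sum_filter]
    _ ≤ ∑ j ∈ Finset.Ioc s N, ENNReal.ofReal (((j : ℝ) ^ 2)⁻¹) :=
        Finset.sum_le_sum_of_subset hsub
    _ = ENNReal.ofReal (∑ j ∈ Finset.Ioc s N, ((j : ℝ) ^ 2)⁻¹) := by
        rw [ENNReal.ofReal_sum_of_nonneg]; intro i _; positivity
    _ ≤ ENNReal.ofReal (2 / (s : ℝ)) := by
        apply ENNReal.ofReal_le_ofReal
        rcases le_or_gt (s+1) N with hN' | hN'
        · have := sum_Ioc_inv_sq_le_sub (α := ℝ) (k := s) (n := N) (by omega) (by omega)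
          have hs0 : (0:ℝ) < s := by exact_mod_cast hs
          have hN0 : (0:ℝ) ≤ (N:ℝ)⁻¹ := by positivity
          have hinv : (0:ℝ) ≤ (s:ℝ)⁻¹ := by positivity
          rw [div_eq_mul_inv]
          linarith [this]
        · rw [Finset.Ioc_eq_empty (by omega)]
          simp
          positivity

/-- Per-index term bound. -/
lemma term_bound {s : ℕ} (hs : 0 < s) (j : ℕ) :
    ((j : ℝ≥0∞) + 1) * Fb s j ≤
      ENNReal.ofReal (2 / (s:ℝ)^6) *
        (if s + 1 ≤ j then ENNReal.ofReal (((j : ℝ) ^ 2)⁻¹) else 0) := by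
  unfold Fb
  by_cases h : s + 1 ≤ j
  · simp only [h, if_true]
    have hj2 : (2:ℝ) ≤ (j:ℝ) := by exact_mod_cast (by omega : 2 ≤ j)
    have hj0 : (0:ℝ) < j := by linarith
    have hjq : ((j : ℝ≥0∞) + 1) = ENNReal.ofReal ((j:ℝ) + 1) := by
      rw [ENNReal.ofReal_add (by positivity) zero_le_one]
      simp [ENNReal.ofReal_natCast]
    rw [hjq, ← ENNReal.ofReal_mul (by positivity), ← ENNReal.ofReal_mul (by positivity)]
    apply ENNReal.ofReal_le_ofReal
    have hs1 : (1:ℝ) ≤ (s:ℝ) := by exact_mod_cast hs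
    have hsj : (s:ℝ) ≤ (j:ℝ) := by exact_mod_cast (by omega : s ≤ j)
    have h6 : (s:ℝ)^6 ≤ (j:ℝ)^6 := pow_le_pow_left₀ (by linarith) hsj 6
    have key : ((j:ℝ)+1) / (j:ℝ)^9 ≤ 2 / ((s:ℝ)^6 * (j:ℝ)^2) := by
      rw [div_le_div_iff₀ (by positivity) (by positivity)]
      calc ((j:ℝ)+1) * ((s:ℝ)^6 * (j:ℝ)^2) ≤ (2*(j:ℝ)) * ((j:ℝ)^6 * (j:ℝ)^2) := by
            apply mul_le_mul (by linarith) (by nlinarith) (by positivity) (by positivity)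
        _ = 2 * (j:ℝ)^9 := by ring
    calc ((j:ℝ)+1) * ((j:ℝ)^9)⁻¹ = ((j:ℝ)+1) / (j:ℝ)^9 := by rw [div_eq_mul_inv]
      _ ≤ 2 / ((s:ℝ)^6 * (j:ℝ)^2) := key
      _ = 2 / (s:ℝ)^6 * ((j:ℝ)^2)⁻¹ := by field_simp
  · simp [h]

lemma sum_j {s : ℕ} (hs : 0 < s) :
    ∑' j : ℕ, ((j : ℝ≥0∞) + 1) * Fb s j ≤ ENNReal.ofReal (4 / (s:ℝ)^7) := by
  calc ∑' j : ℕ, ((j : ℝ≥0∞) + 1) * Fb s j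
      ≤ ∑' j : ℕ, ENNReal.ofReal (2 / (s:ℝ)^6) *
          (if s + 1 ≤ j then ENNReal.ofReal (((j : ℝ) ^ 2)⁻¹) else 0) :=
        Summable.tsum_le_tsum (term_bound hs) ENNReal.summable ENNReal.summable
    _ = ENNReal.ofReal (2 / (s:ℝ)^6) *
          ∑' j : ℕ, (if s + 1 ≤ j then ENNReal.ofReal (((j : ℝ) ^ 2)⁻¹) else 0) :=
        ENNReal.tsum_mul_left
    _ ≤ ENNReal.ofReal (2 / (s:ℝ)^6) * ENNReal.ofReal (2 / (s:ℝ)) :=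
        mul_le_mul_right (tail_inv_sq hs) _
    _ = ENNReal.ofReal (4 / (s:ℝ)^7) := by
        rw [← ENNReal.ofReal_mul (by positivity)]
        congr 1
        have hs0 : (0:ℝ) < s := by exact_mod_cast hs
        field_simp
        ring

lemma S_le (s : ℕ) :
    ∑' p : ℕ × ℕ, Fb s (p.1 + p.2) ≤ ∑' j : ℕ, ((j : ℝ≥0∞) + 1) * Fb s j := by
  set f' : ℕ × ℕ → ℝ≥0∞ := fun q => if q.2 ≤ q.1 then Fb s q.1 else 0 with hf'
  have hinj : Function.Injective (fun p : ℕ × ℕ => (p.1 + p.2, p.1)) := by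
    rintro ⟨a, b⟩ ⟨c, d⟩ h
    simp only [Prod.mk.injEq] at h
    obtain ⟨h1, h2⟩ := h
    simp only [Prod.mk.injEq]
    omega
  calc ∑' p : ℕ × ℕ, Fb s (p.1 + p.2)
      = ∑' p : ℕ × ℕ, f' ((fun p : ℕ × ℕ => (p.1 + p.2, p.1)) p) := by
        refine tsum_congr fun p => ?_
        simp [hf', Nat.le_add_right]
    _ ≤ ∑' q : ℕ × ℕ, f' q := ENNReal.tsum_comp_le_tsum_of_injective hinj f'
    _ = ∑' j : ℕ, ∑' m : ℕ, f' (j, m) := ENNReal.tsum_prod'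
    _ = ∑' j : ℕ, ((j : ℝ≥0∞) + 1) * Fb s j := by
        refine tsum_congr fun j => ?_
        have h1 : ∑' m : ℕ, f' (j, m) = ∑ m ∈ Finset.range (j + 1), f' (j, m) := by
          refine tsum_eq_sum fun m hm => ?_
          simp only [Finset.mem_range] at hm
          simp only [hf']
          rw [if_neg (by omega)]
        rw [h1]
        have h2 : ∀ m ∈ Finset.range (j + 1), f' (j, m) = Fb s j := by
          intro m hm
          simp only [Finset.mem_range] at hm
          simp only [hf']
          rw [if_pos (by omega)]
        rw [Finset.sum_congr rfl h2, Finset.sum_const, Finset.card_range, nsmul_eq_mul]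
        push_cast
        ring

lemma sumFb_y (s : ℕ) (x : ℤ × ℤ) :
    ∑' y : ℤ × ℤ, Fb s (dist1 x y) ≤ 4 * ∑' p : ℕ × ℕ, Fb s (p.1 + p.2) := by
  set i : ℤ × ℤ → (ℕ × ℕ) × (Bool × Bool) := fun y =>
    (((x.1 - y.1).natAbs, (x.2 - y.2).natAbs), (decide (x.1 - y.1 < 0), decide (x.2 - y.2 < 0)))
    with hi
  have hinj : Function.Injective i := by
    intro y z h
    simp only [hi, Prod.mk.injEq] at h
    obtain ⟨⟨h1, h2⟩, h3, h4⟩ := h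
    rw [decide_eq_decide] at h3 h4
    have hy1 : y.1 = z.1 := by omega
    have hy2 : y.2 = z.2 := by omega
    exact Prod.ext hy1 hy2
  set g : (ℕ × ℕ) × (Bool × Bool) → ℝ≥0∞ := fun q => Fb s (q.1.1 + q.1.2) with hg
  calc ∑' y : ℤ × ℤ, Fb s (dist1 x y) = ∑' y : ℤ × ℤ, g (i y) := by
        refine tsum_congr fun y => ?_
        simp [hg, hi, dist1]
    _ ≤ ∑' q : (ℕ × ℕ) × (Bool × Bool), g q := ENNReal.tsum_comp_le_tsum_of_injective hinj g
    _ = ∑' p : ℕ × ℕ, ∑' b : Bool × Bool, Fb s (p.1 + p.2) := ENNReal.tsum_prod'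
    _ = ∑' p : ℕ × ℕ, 4 * Fb s (p.1 + p.2) := by
        refine tsum_congr fun p => ?_
        rw [tsum_fintype]
        simp [Finset.sum_const, Finset.card_univ]
    _ = 4 * ∑' p : ℕ × ℕ, Fb s (p.1 + p.2) := ENNReal.tsum_mul_left

/-- With `ρ = 13/42`, for a box `Q_L` of side `L` partitioned into subboxes of side `L^ρ`,
the probability that two vertices in non-neighboring subboxes are linked by an edge is at
most `C₂ / L^(7ρ - 2)`, assuming `P({x,y} ∈ E) ≤ C / d(x,y)^9` for `d(x,y) > 1`. -/
theorem stmt_6 {Ω : Type*} [MeasureSpace Ω] [IsProbabilityMeasure (ℙ : Measure Ω)]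
    (Edge : ℤ × ℤ → ℤ × ℤ → Set Ω) (hEm : ∀ x y, MeasurableSet (Edge x y))
    (C : ℝ) (hC : 0 < C)
    (hE : ∀ x y : ℤ × ℤ, 1 < dist1 x y →
      ℙ (Edge x y) ≤ ENNReal.ofReal (C / (dist1 x y : ℝ) ^ 9)) :
    ∃ C₂ > (0 : ℝ), ∀ L s : ℕ, 0 < L → 0 < s → (s : ℝ) = (L : ℝ) ^ ((13 : ℝ) / 42) →
      ℙ {ω | ∃ x y : ℤ × ℤ, x ∈ boxQ L ∧ y ∈ boxQ L ∧ nonNeighbor s x y ∧ ω ∈ Edge x y} ≤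
        ENNReal.ofReal (C₂ / (L : ℝ) ^ (7 * ((13 : ℝ) / 42) - 2)) := by
  refine ⟨144 * C, by positivity, ?_⟩
  intro L s hL hs hsl
  set D : ℤ × ℤ → ℤ × ℤ → Set Ω := fun x y =>
    {ω | x ∈ boxQ L ∧ y ∈ boxQ L ∧ nonNeighbor s x y ∧ ω ∈ Edge x y} with hD
  have hset : {ω | ∃ x y : ℤ × ℤ, x ∈ boxQ L ∧ y ∈ boxQ L ∧ nonNeighbor s x y ∧ ω ∈ Edge x y}
      = ⋃ x : ℤ × ℤ, ⋃ y : ℤ × ℤ, D x y := by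
    ext ω
    simp only [hD, Set.mem_setOf_eq, Set.mem_iUnion]
  have hpair : ∀ x y : ℤ × ℤ, ℙ (D x y) ≤ ENNReal.ofReal C * Fb s (dist1 x y) := by
    intro x y
    by_cases hcond : x ∈ boxQ L ∧ y ∈ boxQ L ∧ nonNeighbor s x y
    · have hd : s + 1 ≤ dist1 x y := nonNeighbor_dist hs hcond.2.2
      have hDxy : D x y = Edge x y := by
        ext ω
        simp [hD, hcond.1, hcond.2.1, hcond.2.2]
      rw [hDxy]
      refine (hE x y (by omega)).trans ?_
      have hFb : Fb s (dist1 x y) = ENNReal.ofReal (((dist1 x y : ℝ) ^ 9)⁻¹) := if_pos hd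
      rw [hFb, ← ENNReal.ofReal_mul hC.le, ← div_eq_mul_inv]
    · have hDxy : D x y = ∅ := by
        ext ω
        simp only [hD, Set.mem_setOf_eq, Set.mem_empty_iff_false, iff_false]
        intro hh
        exact hcond ⟨hh.1, hh.2.1, hh.2.2.1⟩
      rw [hDxy]
      simp
  set Fbox : Finset (ℤ × ℤ) := Finset.Icc (-(L:ℤ)) L ×ˢ Finset.Icc (-(L:ℤ)) L with hFbox
  have hmemF : ∀ x : ℤ × ℤ, x ∈ boxQ L → x ∈ Fbox := by
    intro x hx
    obtain ⟨h1, h2⟩ := hx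
    simp only [hFbox, Finset.mem_product, Finset.mem_Icc]
    omega
  set K : ℝ≥0∞ := ENNReal.ofReal C * (4 * ENNReal.ofReal (4 / (s:ℝ)^7)) with hK
  have hy_sum : ∀ x : ℤ × ℤ, ∑' y : ℤ × ℤ, ℙ (D x y) ≤ if x ∈ Fbox then K else 0 := by
    intro x
    by_cases hx : x ∈ Fbox
    · rw [if_pos hx]
      calc ∑' y : ℤ × ℤ, ℙ (D x y)
          ≤ ∑' y : ℤ × ℤ, ENNReal.ofReal C * Fb s (dist1 x y) :=
            Summable.tsum_le_tsum (hpair x) ENNReal.summable ENNReal.summable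
        _ = ENNReal.ofReal C * ∑' y : ℤ × ℤ, Fb s (dist1 x y) := ENNReal.tsum_mul_left
        _ ≤ K := by
            rw [hK]
            refine mul_le_mul_right ?_ _
            refine (sumFb_y s x).trans (mul_le_mul_right ?_ 4)
            exact (S_le s).trans (sum_j hs)
    · rw [if_neg hx]
      have hz : ∀ y : ℤ × ℤ, ℙ (D x y) = 0 := by
        intro y
        have hDxy : D x y = ∅ := by
          ext ω
          simp only [hD, Set.mem_setOf_eq, Set.mem_empty_iff_false, iff_false]
          intro hh
          exact hx (hmemF x hh.1)
        rw [hDxy]; exact measure_empty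
      simp [hz]
  have hcard : Fbox.card = (2 * L + 1) * (2 * L + 1) := by
    rw [hFbox, Finset.card_product, Int.card_Icc]
    congr 1 <;> omega
  calc ℙ {ω | ∃ x y : ℤ × ℤ, x ∈ boxQ L ∧ y ∈ boxQ L ∧ nonNeighbor s x y ∧ ω ∈ Edge x y}
      = ℙ (⋃ x : ℤ × ℤ, ⋃ y : ℤ × ℤ, D x y) := by rw [hset]
    _ ≤ ∑' x : ℤ × ℤ, ℙ (⋃ y : ℤ × ℤ, D x y) := measure_iUnion_le _
    _ ≤ ∑' x : ℤ × ℤ, ∑' y : ℤ × ℤ, ℙ (D x y) :=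
        Summable.tsum_le_tsum (fun x => measure_iUnion_le _) ENNReal.summable ENNReal.summable
    _ ≤ ∑' x : ℤ × ℤ, (if x ∈ Fbox then K else 0) :=
        Summable.tsum_le_tsum hy_sum ENNReal.summable ENNReal.summable
    _ = ∑ x ∈ Fbox, (if x ∈ Fbox then K else 0) :=
        tsum_eq_sum (fun x hx => if_neg hx)
    _ = Fbox.card • K := by
        rw [Finset.sum_congr rfl (fun x hx => if_pos hx), Finset.sum_const]
    _ = ((2 * L + 1) * (2 * L + 1) : ℕ) * K := by rw [hcard, nsmul_eq_mul]
    _ ≤ ENNReal.ofReal (144 * C / (L : ℝ) ^ (7 * ((13 : ℝ) / 42) - 2)) := by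
        rw [hK]
        have h4 : (4 : ℝ≥0∞) = ENNReal.ofReal (4:ℝ) := by norm_num
        have hcast : (((2 * L + 1) * (2 * L + 1) : ℕ) : ℝ≥0∞)
            = ENNReal.ofReal (((2 * L + 1) * (2 * L + 1) : ℕ) : ℝ) := by
          rw [ENNReal.ofReal_natCast]
        rw [hcast, h4, ← ENNReal.ofReal_mul (by positivity),
          ← ENNReal.ofReal_mul (by positivity), ← ENNReal.ofReal_mul (by positivity)]
        apply ENNReal.ofReal_le_ofReal
        -- real arithmetic
        have hL0 : (0:ℝ) < L := by exact_mod_cast hL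
        have hL1 : (1:ℝ) ≤ L := by exact_mod_cast hL
        set e : ℝ := 7 * ((13 : ℝ) / 42) - 2 with he
        have hA : (0:ℝ) < (L:ℝ) ^ e := Real.rpow_pos_of_pos hL0 _
        have hs7 : (s:ℝ)^7 = (L:ℝ) ^ e * (L:ℝ)^2 := by
          rw [hsl, ← Real.rpow_natCast ((L:ℝ) ^ ((13:ℝ)/42)) 7, ← Real.rpow_mul hL0.le,
            ← Real.rpow_natCast (L:ℝ) 2, ← Real.rpow_add hL0]
          norm_num [he]
        have h9 : (((2 * L + 1) * (2 * L + 1) : ℕ) : ℝ) ≤ 9 * (L:ℝ)^2 := by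
          push_cast
          nlinarith
        calc (((2 * L + 1) * (2 * L + 1) : ℕ) : ℝ) * (C * (4 * (4 / (s:ℝ)^7)))
            ≤ 9 * (L:ℝ)^2 * (C * (4 * (4 / (s:ℝ)^7))) := by
              apply mul_le_mul_of_nonneg_right h9
              positivity
          _ = 144 * C / (L:ℝ) ^ e := by
              rw [hs7]
              field_simp
              ring
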